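/- arXiv:2009.05496 — 5 statements merged into one kernel-verified Lean document; each statement's English description precedes it below -/
import Mathlib

section
/- Let h : [0,1] → ℝ be continuous with h(0) = h(1) = 0, strictly increasing on [0, S_M] and strictly decreasing on [S_M, 1] for some S_M ∈ (0,1), and let p_i, p_d : (0,1] → ℝ be continuous, strictly decreasing on (0,1), with p_i(S) < p_d(S) for all S ∈ (0,1) and p_i(1) = p_d(1). Then there exists a unique pair (S_*, S^*) with 0 < S_* ≤ S_M ≤ S^* < 1 such that h(S_*) = h(S^*) and p_i(S_*) = p_d(S^*); moreover the inequalities are strict: 0 < S_* < S_M < S^* < 1. -/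
open Set Filter Topology

/-- Existence and uniqueness of the pair `(S_*, S^*)` satisfying `h S_* = h S^*` and
`p_i S_* = p_d S^*`, together with strictness of the inequalities
`0 < S_* < S_M < S^* < 1`. -/
theorem stmt0 (h p_i p_d : ℝ → ℝ) (S_M : ℝ)
    (hSM : S_M ∈ Ioo (0:ℝ) 1)
    (hc : ContinuousOn h (Icc 0 1)) (h0 : h 0 = 0) (h1 : h 1 = 0)
    (hmono : StrictMonoOn h (Icc 0 S_M)) (hanti : StrictAntiOn h (Icc S_M 1))
    (hpic : ContinuousOn p_i (Ioc 0 1)) (hpdc : ContinuousOn p_d (Ioc 0 1))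
    (hpia : StrictAntiOn p_i (Ioo 0 1)) (hpda : StrictAntiOn p_d (Ioo 0 1))
    (hpid : ∀ S ∈ Ioo (0:ℝ) 1, p_i S < p_d S) (hp1 : p_i 1 = p_d 1) :
    (∃! q : ℝ × ℝ, 0 < q.1 ∧ q.1 ≤ S_M ∧ S_M ≤ q.2 ∧ q.2 < 1 ∧
        h q.1 = h q.2 ∧ p_i q.1 = p_d q.2) ∧
    (∀ q : ℝ × ℝ, (0 < q.1 ∧ q.1 ≤ S_M ∧ S_M ≤ q.2 ∧ q.2 < 1 ∧
        h q.1 = h q.2 ∧ p_i q.1 = p_d q.2) →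
      0 < q.1 ∧ q.1 < S_M ∧ S_M < q.2 ∧ q.2 < 1) := by
  obtain ⟨hM0, hM1⟩ := hSM
  have hMIoo : S_M ∈ Ioo (0:ℝ) 1 := ⟨hM0, hM1⟩
  have hIcc0 : Icc (0:ℝ) S_M ⊆ Icc 0 1 := Icc_subset_Icc le_rfl hM1.le
  have hIcc1 : Icc S_M (1:ℝ) ⊆ Icc 0 1 := Icc_subset_Icc hM0.le le_rfl
  have hmem0 : (0:ℝ) ∈ Icc (0:ℝ) S_M := ⟨le_rfl, hM0.le⟩
  have hmemM : S_M ∈ Icc (0:ℝ) S_M := ⟨hM0.le, le_rfl⟩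
  have hmemM' : S_M ∈ Icc S_M (1:ℝ) := ⟨le_rfl, hM1.le⟩
  have hmem1 : (1:ℝ) ∈ Icc S_M (1:ℝ) := ⟨hM1.le, le_rfl⟩
  -- positivity / bounds for h
  have hpos : ∀ b ∈ Ico S_M (1:ℝ), 0 < h b := by
    intro b hb
    have := hanti ⟨hb.1, hb.2.le⟩ hmem1 hb.2
    rwa [h1] at this
  have hub : ∀ b ∈ Icc S_M (1:ℝ), h b ≤ h S_M := by
    intro b hb
    rcases eq_or_lt_of_le hb.1 with e | l
    · rw [← e]
    · exact (hanti hmemM' hb l).le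
  have hnn : ∀ b ∈ Icc S_M (1:ℝ), 0 ≤ h b := by
    intro b hb
    rcases eq_or_lt_of_le hb.2 with e | l
    · rw [e, h1]
    · exact (hpos b ⟨hb.1, l⟩).le
  have hnn0 : ∀ a ∈ Icc (0:ℝ) S_M, 0 ≤ h a := by
    intro a ha
    rcases eq_or_lt_of_le ha.1 with e | l
    · rw [← e, h0]
    · rw [← h0]; exact (hmono hmem0 ha l).le
  have hub0 : ∀ a ∈ Icc (0:ℝ) S_M, h a ≤ h S_M := by
    intro a ha
    rcases eq_or_lt_of_le ha.2 with e | l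
    · rw [e]
    · exact (hmono ha hmemM l).le
  -- the conjugate function s
  have conj : ∀ b ∈ Icc S_M (1:ℝ), ∃ a, a ∈ Icc (0:ℝ) S_M ∧ h a = h b := by
    intro b hb
    have hmem : h b ∈ Icc (h 0) (h S_M) := by
      rw [h0]; exact ⟨hnn b hb, hub b hb⟩
    obtain ⟨a, ha, he⟩ := intermediate_value_Icc hM0.le (hc.mono hIcc0) hmem
    exact ⟨a, ha, he⟩
  classical
  set s : ℝ → ℝ := fun b => if hb : b ∈ Icc S_M (1:ℝ) then Classical.choose (conj b hb) else 0
    with hsdef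
  have sspec : ∀ b ∈ Icc S_M (1:ℝ), s b ∈ Icc (0:ℝ) S_M ∧ h (s b) = h b := by
    intro b hb
    rw [hsdef]
    simp only [dif_pos hb]
    exact Classical.choose_spec (conj b hb)
  have suniq : ∀ a ∈ Icc (0:ℝ) S_M, ∀ b ∈ Icc S_M (1:ℝ), h a = h b → a = s b := by
    intro a ha b hb he
    exact hmono.injOn ha (sspec b hb).1 (he.trans (sspec b hb).2.symm)
  have sM : s S_M = S_M := (suniq S_M hmemM S_M hmemM' rfl).symm
  have santi : ∀ b ∈ Icc S_M (1:ℝ), ∀ b' ∈ Icc S_M (1:ℝ), b < b' → s b' < s b := by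
    intro b hb b' hb' hlt
    by_contra hle
    push_neg at hle
    have h1' : h b' < h b := hanti hb hb' hlt
    have h2' : h (s b) ≤ h (s b') := hmono.monotoneOn (sspec b hb).1 (sspec b' hb').1 hle
    rw [(sspec b hb).2, (sspec b' hb').2] at h2'
    linarith
  have spos : ∀ b ∈ Ico S_M (1:ℝ), 0 < s b := by
    intro b hb
    have hb' : b ∈ Icc S_M (1:ℝ) := ⟨hb.1, hb.2.le⟩
    rcases (sspec b hb').1.1.eq_or_lt with e | l
    · exfalso
      have he := (sspec b hb').2
      rw [← e, h0] at he
      have := hpos b hb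
      linarith
    · exact l
  have ssurj : ∀ a ∈ Icc (0:ℝ) S_M, ∃ b ∈ Icc S_M (1:ℝ), s b = a := by
    intro a ha
    have hmem : h a ∈ Icc (h 1) (h S_M) := by
      rw [h1]; exact ⟨hnn0 a ha, hub0 a ha⟩
    obtain ⟨b, hb, he⟩ := intermediate_value_Icc' hM1.le (hc.mono hIcc1) hmem
    exact ⟨b, hb, (suniq a ha b hb he.symm).symm⟩
  -- p_i 1 < p_i S_M
  have h1Ioc : (1:ℝ) ∈ Ioc (0:ℝ) 1 := ⟨one_pos, le_rfl⟩
  set x₀ : ℝ := (S_M + 1) / 2 with hx₀def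
  have hx₀1 : S_M < x₀ := by rw [hx₀def]; linarith
  have hx₀2 : x₀ < 1 := by rw [hx₀def]; linarith
  have hx₀Ioo : x₀ ∈ Ioo (0:ℝ) 1 := ⟨lt_trans hM0 hx₀1, hx₀2⟩
  have hpi1 : p_i 1 ≤ p_i x₀ := by
    have hne : (𝓝[Ioo x₀ 1] (1:ℝ)).NeBot := by
      rw [← mem_closure_iff_nhdsWithin_neBot, closure_Ioo hx₀2.ne]
      exact ⟨hx₀2.le, le_rfl⟩
    have ht : Tendsto p_i (𝓝[Ioo x₀ 1] (1:ℝ)) (𝓝 (p_i 1)) :=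
      (hpic 1 h1Ioc).mono_left (nhdsWithin_mono _ fun x hx => ⟨lt_trans hx₀Ioo.1 hx.1, hx.2.le⟩)
    refine le_of_tendsto ht ?_
    filter_upwards [self_mem_nhdsWithin] with x hx
    exact (hpia hx₀Ioo ⟨lt_trans hx₀Ioo.1 hx.1, hx.2⟩ hx.1).le
  have hpiM : p_i 1 < p_i S_M := lt_of_le_of_lt hpi1 (hpia hMIoo hx₀Ioo hx₀1)
  -- choose b₁ close to 1 with p_d b₁ < p_i S_M
  have hb₁ex : ∃ b₁, p_d b₁ < p_i S_M ∧ b₁ ∈ Ioo S_M 1 := by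
    have hne : (𝓝[Ioo S_M 1] (1:ℝ)).NeBot := by
      rw [← mem_closure_iff_nhdsWithin_neBot, closure_Ioo hM1.ne]
      exact ⟨hM1.le, le_rfl⟩
    have ht : Tendsto p_d (𝓝[Ioo S_M 1] (1:ℝ)) (𝓝 (p_d 1)) :=
      (hpdc 1 h1Ioc).mono_left (nhdsWithin_mono _ fun x hx => ⟨lt_trans hM0 hx.1, hx.2.le⟩)
    have hlt : p_d 1 < p_i S_M := by rw [← hp1]; exact hpiM
    exact ((ht.eventually_lt_const hlt).and self_mem_nhdsWithin).exists
  obtain ⟨b₁, hb₁d, hb₁m⟩ := hb₁ex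
  -- memberships for points of [S_M, b₁]
  have hmemb : ∀ b ∈ Icc S_M b₁, b ∈ Icc S_M (1:ℝ) ∧ b ∈ Ioo (0:ℝ) 1 ∧ s b ∈ Ioo (0:ℝ) 1 := by
    intro b hb
    have h1' : b ∈ Icc S_M (1:ℝ) := ⟨hb.1, le_trans hb.2 hb₁m.2.le⟩
    have h2' : b ∈ Ioo (0:ℝ) 1 := ⟨lt_of_lt_of_le hM0 hb.1, lt_of_le_of_lt hb.2 hb₁m.2⟩
    have h3' : s b ∈ Ioo (0:ℝ) 1 :=
      ⟨spos b ⟨hb.1, h2'.2⟩, lt_of_le_of_lt (sspec b h1').1.2 hM1⟩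
    exact ⟨h1', h2', h3'⟩
  -- the set A
  set A : Set ℝ := {b | b ∈ Icc S_M b₁ ∧ p_i (s b) ≤ p_d b} with hAdef
  have hSMA : S_M ∈ A := by
    refine ⟨⟨le_rfl, hb₁m.1.le⟩, ?_⟩
    rw [sM]
    exact (hpid S_M hMIoo).le
  have hAnon : A.Nonempty := ⟨S_M, hSMA⟩
  have hAbdd : BddAbove A := ⟨b₁, fun b hb => hb.1.2⟩
  -- downward closedness of A
  have hdc : ∀ b ∈ A, ∀ b', S_M ≤ b' → b' ≤ b → b' ∈ A := by
    intro b hb b' hge hle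
    rcases hle.eq_or_lt with e | l
    · rwa [e]
    obtain ⟨hbI, hbO, hsO⟩ := hmemb b hb.1
    have hb'm : b' ∈ Icc S_M b₁ := ⟨hge, le_trans hle hb.1.2⟩
    obtain ⟨hb'I, hb'O, hs'O⟩ := hmemb b' hb'm
    refine ⟨hb'm, ?_⟩
    have hs1 : s b < s b' := santi b' hb'I b hbI l
    have hp1' : p_i (s b') < p_i (s b) := hpia hsO hs'O hs1
    have hp2' : p_d b < p_d b' := hpda hb'O hbO l
    have := hb.2
    linarith
  set bs : ℝ := sSup A with hbsdef
  have hbs1 : S_M ≤ bs := le_csSup hAbdd hSMA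
  have hbs2 : bs ≤ b₁ := csSup_le hAnon fun b hb => hb.1.2
  have hbsm : bs ∈ Icc S_M b₁ := ⟨hbs1, hbs2⟩
  obtain ⟨hbsI, hbsO, hssO⟩ := hmemb bs hbsm
  have hbsIoc : bs ∈ Ioc (0:ℝ) 1 := ⟨hbsO.1, hbsO.2.le⟩
  have hsbsM : s bs ≤ S_M := (sspec bs hbsI).1.2
  have hsbsIoc : s bs ∈ Ioc (0:ℝ) 1 := ⟨hssO.1, hssO.2.le⟩
  -- p_i (s b₁) > p_d b₁
  have hFb₁ : p_d b₁ < p_i (s b₁) := by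
    have hb₁I : b₁ ∈ Icc S_M (1:ℝ) := ⟨hb₁m.1.le, hb₁m.2.le⟩
    have hs₁O : s b₁ ∈ Ioo (0:ℝ) 1 :=
      ⟨spos b₁ ⟨hb₁I.1, hb₁m.2⟩, lt_of_le_of_lt (sspec b₁ hb₁I).1.2 hM1⟩
    have : p_i S_M ≤ p_i (s b₁) := hpia.antitoneOn hs₁O hMIoo (sspec b₁ hb₁I).1.2
    linarith
  -- the key equality  p_i (s bs) = p_d bs
  have heq : p_i (s bs) = p_d bs := by
    by_contra hne
    rcases lt_or_gt_of_ne hne with hlt | hgt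
    · -- F(bs) < 0 : find a point of A above bs
      have hbb₁ : bs < b₁ := by
        rcases hbs2.eq_or_lt with e | l
        · exfalso; rw [e] at hlt; linarith
        · exact l
      set β : ℝ := (p_i (s bs) + p_d bs) / 2 with hβdef
      have hβ1 : p_i (s bs) < β := by rw [hβdef]; linarith
      have hβ2 : β < p_d bs := by rw [hβdef]; linarith
      -- a₂ below s bs with p_i a₂ < β
      have hne2 : (𝓝[Ioo 0 (s bs)] (s bs)).NeBot := by
        rw [← mem_closure_iff_nhdsWithin_neBot, closure_Ioo hssO.1.ne]
        exact ⟨hssO.1.le, le_rfl⟩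
      have ht : Tendsto p_i (𝓝[Ioo 0 (s bs)] (s bs)) (𝓝 (p_i (s bs))) :=
        (hpic _ hsbsIoc).mono_left
          (nhdsWithin_mono _ fun x hx => ⟨hx.1, le_trans hx.2.le hsbsIoc.2⟩)
      obtain ⟨a₂, hpa₂, ha₂⟩ := ((ht.eventually_lt_const hβ1).and self_mem_nhdsWithin).exists
      obtain ⟨b₂, hb₂I, hb₂e⟩ := ssurj a₂ ⟨ha₂.1.le, le_trans ha₂.2.le hsbsM⟩
      have hb₂gt : bs < b₂ := by
        by_contra hle
        push_neg at hle
        rcases hle.eq_or_lt with e | l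
        · rw [← hb₂e, e] at ha₂
          exact lt_irrefl _ ha₂.2
        · have := santi b₂ hb₂I bs hbsI l
          rw [hb₂e] at this
          linarith [ha₂.2]
      have hc' : bs < min b₂ b₁ := lt_min hb₂gt hbb₁
      have hne3 : (𝓝[Ioo bs (min b₂ b₁)] bs).NeBot := by
        rw [← mem_closure_iff_nhdsWithin_neBot, closure_Ioo hc'.ne]
        exact ⟨le_rfl, hc'.le⟩
      have ht2 : Tendsto p_d (𝓝[Ioo bs (min b₂ b₁)] bs) (𝓝 (p_d bs)) :=
        (hpdc _ hbsIoc).mono_left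
          (nhdsWithin_mono _ fun x hx =>
            ⟨lt_trans hbsIoc.1 hx.1, (lt_of_lt_of_le hx.2 (min_le_right _ _)).le.trans hb₁m.2.le⟩)
      obtain ⟨b', hb'd, hb'm⟩ := ((ht2.eventually_const_lt hβ2).and self_mem_nhdsWithin).exists
      -- b' ∈ A and b' > bs : contradiction
      have hb'Icc : b' ∈ Icc S_M b₁ :=
        ⟨le_trans hbs1 hb'm.1.le, (lt_of_lt_of_le hb'm.2 (min_le_right _ _)).le⟩
      obtain ⟨hb'I, hb'O, hs'O⟩ := hmemb b' hb'Icc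
      have hsb' : a₂ < s b' := by
        have := santi b' hb'I b₂ hb₂I (lt_of_lt_of_le hb'm.2 (min_le_left _ _))
        rwa [hb₂e] at this
      have ha₂O : a₂ ∈ Ioo (0:ℝ) 1 := ⟨ha₂.1, lt_trans (lt_of_lt_of_le ha₂.2 hsbsM) hM1⟩
      have hp' : p_i (s b') ≤ p_d b' := by
        have := hpia ha₂O hs'O hsb'
        linarith
      have : b' ≤ bs := le_csSup hAbdd ⟨hb'Icc, hp'⟩
      linarith [hb'm.1]
    · -- F(bs) > 0 : find a point of A just below bs with F > 0
      have hbM : S_M < bs := by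
        rcases hbs1.eq_or_lt with e | l
        · exfalso
          have : s bs = S_M := by rw [← e, sM]
          rw [this, ← e] at hgt
          have := hpid S_M hMIoo
          linarith
        · exact l
      have haM : s bs < S_M := by
        have := santi S_M hmemM' bs hbsI hbM
        rwa [sM] at this
      set β : ℝ := (p_d bs + p_i (s bs)) / 2 with hβdef
      have hβ1 : p_d bs < β := by rw [hβdef]; linarith
      have hβ2 : β < p_i (s bs) := by rw [hβdef]; linarith
      -- a₂ above s bs with p_i a₂ > β
      have hne2 : (𝓝[Ioo (s bs) S_M] (s bs)).NeBot := by
        rw [← mem_closure_iff_nhdsWithin_neBot, closure_Ioo haM.ne]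
        exact ⟨le_rfl, haM.le⟩
      have ht : Tendsto p_i (𝓝[Ioo (s bs) S_M] (s bs)) (𝓝 (p_i (s bs))) :=
        (hpic _ hsbsIoc).mono_left
          (nhdsWithin_mono _ fun x hx => ⟨lt_trans hssO.1 hx.1, (hx.2.trans hM1).le⟩)
      obtain ⟨a₂, hpa₂, ha₂⟩ := ((ht.eventually_const_lt hβ2).and self_mem_nhdsWithin).exists
      obtain ⟨b₂, hb₂I, hb₂e⟩ := ssurj a₂ ⟨(lt_trans hssO.1 ha₂.1).le, ha₂.2.le⟩
      have hb₂lt : b₂ < bs := by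
        by_contra hle
        push_neg at hle
        rcases hle.eq_or_lt with e | l
        · rw [← hb₂e, ← e] at ha₂
          exact lt_irrefl _ ha₂.1
        · have := santi bs hbsI b₂ hb₂I l
          rw [hb₂e] at this
          linarith [ha₂.1]
      have hne3 : (𝓝[Ioo b₂ bs] bs).NeBot := by
        rw [← mem_closure_iff_nhdsWithin_neBot, closure_Ioo hb₂lt.ne]
        exact ⟨hb₂lt.le, le_rfl⟩
      have ht2 : Tendsto p_d (𝓝[Ioo b₂ bs] bs) (𝓝 (p_d bs)) :=
        (hpdc _ hbsIoc).mono_left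
          (nhdsWithin_mono _ fun x hx =>
            ⟨lt_trans (lt_of_lt_of_le hM0 hb₂I.1) hx.1, (hx.2.trans_le hbs2).le.trans hb₁m.2.le⟩)
      obtain ⟨b', hb'd, hb'm⟩ := ((ht2.eventually_lt_const hβ1).and self_mem_nhdsWithin).exists
      -- b' ∈ A by downward closedness, but then p_i (s b') ≤ p_d b' < β < p_i a₂ < p_i (s b')
      obtain ⟨b'', hb''A, hlt''⟩ := exists_lt_of_lt_csSup hAnon hb'm.2
      have hb'A : b' ∈ A := hdc b'' hb''A b' (le_trans hb₂I.1 hb'm.1.le) hlt''.le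
      have hb'Icc : b' ∈ Icc S_M b₁ := hb'A.1
      obtain ⟨hb'I, hb'O, hs'O⟩ := hmemb b' hb'Icc
      have hsb' : s b' < a₂ := by
        have := santi b₂ hb₂I b' hb'I hb'm.1
        rwa [hb₂e] at this
      have ha₂O : a₂ ∈ Ioo (0:ℝ) 1 := ⟨lt_trans hssO.1 ha₂.1, lt_trans ha₂.2 hM1⟩
      have hp' : p_i a₂ < p_i (s b') := hpia hs'O ha₂O hsb'
      have := hb'A.2
      linarith
  -- the witness
  have hbslt1 : bs < 1 := lt_of_le_of_lt hbs2 hb₁m.2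
  have hP0 : 0 < s bs ∧ s bs ≤ S_M ∧ S_M ≤ bs ∧ bs < 1 ∧ h (s bs) = h bs ∧
      p_i (s bs) = p_d bs :=
    ⟨hssO.1, hsbsM, hbs1, hbslt1, (sspec bs hbsI).2, heq⟩
  -- pairwise uniqueness
  have haux : ∀ q q' : ℝ × ℝ,
      (0 < q.1 ∧ q.1 ≤ S_M ∧ S_M ≤ q.2 ∧ q.2 < 1 ∧ h q.1 = h q.2 ∧ p_i q.1 = p_d q.2) →
      (0 < q'.1 ∧ q'.1 ≤ S_M ∧ S_M ≤ q'.2 ∧ q'.2 < 1 ∧ h q'.1 = h q'.2 ∧ p_i q'.1 = p_d q'.2) →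
      q.2 < q'.2 → False := by
    rintro ⟨a, b⟩ ⟨a', b'⟩ ⟨ha0, haM, hMb, hb1', hh, hp⟩ ⟨ha0', haM', hMb', hb1'', hh', hp'⟩ hlt
    simp only at *
    have hbI : b ∈ Icc S_M (1:ℝ) := ⟨hMb, hb1'.le⟩
    have hb'I : b' ∈ Icc S_M (1:ℝ) := ⟨hMb', hb1''.le⟩
    have hhb : h b' < h b := hanti hbI hb'I hlt
    have hha : h a' < h a := by rw [← hh, ← hh'] at hhb; exact hhb
    have haa : a' < a := by
      by_contra hle
      push_neg at hle
      have := hmono.monotoneOn ⟨ha0.le, haM⟩ ⟨ha0'.le, haM'⟩ hle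
      linarith
    have hpa : p_i a < p_i a' := hpia ⟨ha0', lt_of_le_of_lt haM' hM1⟩
      ⟨ha0, lt_of_le_of_lt haM hM1⟩ haa
    have hpb : p_d b' < p_d b := hpda ⟨lt_of_lt_of_le hM0 hMb, lt_trans hlt hb1''⟩
      ⟨lt_of_lt_of_le hM0 hMb', hb1''⟩ hlt
    rw [hp, hp'] at hpa
    linarith
  have huniq : ∀ q q' : ℝ × ℝ,
      (0 < q.1 ∧ q.1 ≤ S_M ∧ S_M ≤ q.2 ∧ q.2 < 1 ∧ h q.1 = h q.2 ∧ p_i q.1 = p_d q.2) →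
      (0 < q'.1 ∧ q'.1 ≤ S_M ∧ S_M ≤ q'.2 ∧ S_M ≤ q'.2 ∧ q'.2 < 1 ∧ h q'.1 = h q'.2 ∧
        p_i q'.1 = p_d q'.2) → True := fun _ _ _ _ => trivial
  have huniq2 : ∀ q q' : ℝ × ℝ,
      (0 < q.1 ∧ q.1 ≤ S_M ∧ S_M ≤ q.2 ∧ q.2 < 1 ∧ h q.1 = h q.2 ∧ p_i q.1 = p_d q.2) →
      (0 < q'.1 ∧ q'.1 ≤ S_M ∧ S_M ≤ q'.2 ∧ q'.2 < 1 ∧ h q'.1 = h q'.2 ∧ p_i q'.1 = p_d q'.2) →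
      q = q' := by
    intro q q' hq hq'
    have h2 : q.2 = q'.2 := by
      rcases lt_trichotomy q.2 q'.2 with hlt | he | hgt
      · exact absurd (haux q q' hq hq' hlt) (fun f => f)
      · exact he
      · exact absurd (haux q' q hq' hq hgt) (fun f => f)
    have h1' : q.1 = q'.1 := by
      apply hmono.injOn ⟨hq.1.le, hq.2.1⟩ ⟨hq'.1.le, hq'.2.1⟩
      rw [hq.2.2.2.2.1, hq'.2.2.2.2.1, h2]
    exact Prod.ext h1' h2
  -- strictness
  have hstrict : ∀ q : ℝ × ℝ, (0 < q.1 ∧ q.1 ≤ S_M ∧ S_M ≤ q.2 ∧ q.2 < 1 ∧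
      h q.1 = h q.2 ∧ p_i q.1 = p_d q.2) →
      0 < q.1 ∧ q.1 < S_M ∧ S_M < q.2 ∧ q.2 < 1 := by
    rintro ⟨a, b⟩ ⟨ha0, haM, hMb, hb1', hh, hp⟩
    simp only at *
    have hbM : S_M < b := by
      rcases hMb.eq_or_lt with e | l
      · exfalso
        have ha' : a = S_M := by
          apply hmono.injOn ⟨ha0.le, haM⟩ hmemM
          rw [hh, ← e]
        rw [ha', ← e] at hp
        have := hpid S_M hMIoo
        linarith
      · exact l
    have haMlt : a < S_M := by
      rcases haM.eq_or_lt with e | l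
      · exfalso
        have hb' : S_M = b := by
          apply hanti.injOn hmemM' ⟨hMb, hb1'.le⟩
          rw [← e, hh]
        rw [← hb'] at hbM
        exact lt_irrefl _ hbM
      · exact l
    exact ⟨ha0, haMlt, hbM, hb1'⟩
  refine ⟨⟨(s bs, bs), hP0, fun q hq => huniq2 q (s bs, bs) hq hP0⟩, hstrict⟩
end

section
/- Let h : [0,1] → ℝ be continuous with h(0) = h(1) = 0, strictly increasing on [0, S_M] and strictly decreasing on [S_M, 1] for some S_M ∈ (0,1); let Ŝ : [0, S_M] → [S_M, 1] satisfy h(Ŝ(s)) = h(s); let p_i, p_d : (0,1] → ℝ be continuous and strictly decreasing on (0,1) with p_i(S) < p_d(S) for S ∈ (0,1) and p_i(1) = p_d(1); and let (S_*, S^*) be the unique pair with 0 < S_* ≤ S_M ≤ S^* < 1 satisfying h(S_*) = h(S^*) and p_i(S_*) = p_d(S^*). Then for every S_r ∈ [S_*, S_M), setting S_l := Ŝ(S_r), one has p_i(S_l) < p_i(S_r) ≤ p_d(S_l). -/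
open Set

/-- Admissibility of the stationary shock with undetermined left state and imbibition
right state: for `S_r ∈ [S_*, S_M)` and `S_l = Ŝ S_r` one has
`p_i S_l < p_i S_r ≤ p_d S_l`. -/
theorem stmt3 (h p_i p_d : ℝ → ℝ) (S_M : ℝ) (hSM : S_M ∈ Ioo (0:ℝ) 1)
    (hc : ContinuousOn h (Icc 0 1)) (h0 : h 0 = 0) (h1 : h 1 = 0)
    (hmono : StrictMonoOn h (Icc 0 S_M)) (hanti : StrictAntiOn h (Icc S_M 1))
    (Shat : ℝ → ℝ)
    (hShat : ∀ s ∈ Icc (0:ℝ) S_M, Shat s ∈ Icc S_M 1 ∧ h (Shat s) = h s)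
    (hpic : ContinuousOn p_i (Ioc 0 1)) (hpdc : ContinuousOn p_d (Ioc 0 1))
    (hpia : StrictAntiOn p_i (Ioo 0 1)) (hpda : StrictAntiOn p_d (Ioo 0 1))
    (hpid : ∀ S ∈ Ioo (0:ℝ) 1, p_i S < p_d S) (hp1 : p_i 1 = p_d 1)
    (Sstar Sup : ℝ) (hS1 : 0 < Sstar) (hS2 : Sstar ≤ S_M) (hS3 : S_M ≤ Sup)
    (hS4 : Sup < 1) (hSh : h Sstar = h Sup) (hSp : p_i Sstar = p_d Sup) :
    ∀ S_r ∈ Ico Sstar S_M,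
      p_i (Shat S_r) < p_i S_r ∧ p_i S_r ≤ p_d (Shat S_r) := by
  rintro S_r ⟨hr1, hr2⟩
  have hr0 : 0 < S_r := lt_of_lt_of_le hS1 hr1
  have hrm : S_r ∈ Icc (0:ℝ) S_M := ⟨le_of_lt hr0, le_of_lt hr2⟩
  obtain ⟨hlmem, hlh⟩ := hShat S_r hrm
  set S_l := Shat S_r with hSl
  have hl0 : 0 < S_l := lt_of_lt_of_le hSM.1 hlmem.1
  -- h S_r > 0
  have hhr : 0 < h S_r := by
    have := hmono ⟨le_refl 0, le_of_lt hSM.1⟩ hrm hr0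
    rwa [h0] at this
  -- S_l < 1
  have hl1 : S_l < 1 := by
    rcases lt_or_eq_of_le hlmem.2 with h' | h'
    · exact h'
    · exfalso
      rw [h', h1] at hlh
      exact absurd hlh.symm (ne_of_gt hhr)
  have hr1' : S_r < 1 := lt_trans hr2 hSM.2
  constructor
  · -- p_i S_l < p_i S_r : since S_r < S_M ≤ S_l
    exact hpia ⟨hr0, hr1'⟩ ⟨hl0, hl1⟩ (lt_of_lt_of_le hr2 hlmem.1)
  · -- p_i S_r ≤ p_d S_l
    have hSup0 : 0 < Sup := lt_of_lt_of_le hSM.1 hS3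
    -- h S_r ≥ h Sstar
    have hh1 : h Sstar ≤ h S_r := by
      rcases lt_or_eq_of_le hr1 with h' | h'
      · exact le_of_lt (hmono ⟨le_of_lt hS1, hS2⟩ hrm h')
      · rw [h']
    -- so h Sup ≤ h S_l, hence S_l ≤ Sup
    have hh2 : h Sup ≤ h S_l := by rw [hlh, ← hSh]; exact hh1
    have hls : S_l ≤ Sup := by
      by_contra hcon
      push_neg at hcon
      have := hanti ⟨hS3, le_of_lt hS4⟩ hlmem hcon
      exact absurd hh2 (not_le_of_gt this)
    -- p_d Sup ≤ p_d S_l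
    have hpd : p_d Sup ≤ p_d S_l := by
      rcases lt_or_eq_of_le hls with h' | h'
      · exact le_of_lt (hpda ⟨hl0, hl1⟩ ⟨hSup0, hS4⟩ h')
      · rw [h']
    -- p_i S_r ≤ p_i Sstar
    have hpi : p_i S_r ≤ p_i Sstar := by
      rcases lt_or_eq_of_le hr1 with h' | h'
      · exact le_of_lt (hpia ⟨hS1, lt_of_le_of_lt hS2 hSM.2⟩ ⟨hr0, hr1'⟩ h')
      · rw [h']
    calc p_i S_r ≤ p_i Sstar := hpi
      _ = p_d Sup := hSp
      _ ≤ p_d S_l := hpd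
end

section
/- Let h : ℝ → ℝ be continuous, let c, A, S_l, S_r ∈ ℝ with S_l ≠ S_r, h(S_l) ≠ 0 and h(S_r) ≠ 0. Let S : ℝ → ℝ satisfy S(η) → S_l as η → −∞ and S(η) → S_r as η → +∞, and let p : ℝ → ℝ be differentiable and bounded such that −c·S(η) + h(S(η))·(1 + p'(η)) = A for all η ∈ ℝ. Then p'(η) → 0 as η → ±∞, and consequently c = (h(S_l) − h(S_r))/(S_l − S_r) (the Rankine–Hugoniot speed) and A = −c·S_l + h(S_l). -/
open Set Filter

lemma aux_pos (p : ℝ → ℝ) (hp : Differentiable ℝ p) (C : ℝ) (hC : ∀ x, |p x| ≤ C)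
    (L : ℝ) (hLpos : 0 < L) (hL : Tendsto (deriv p) atTop (nhds L)) : False := by
  obtain ⟨M, hM⟩ := (hL.eventually (eventually_gt_nhds (by linarith : L / 2 < L))).exists_forall_of_atTop
  set g : ℝ → ℝ := fun x => p x - L / 2 * x with hg
  have hgd : Differentiable ℝ g := hp.sub (differentiable_id.const_mul _)
  have hmono : MonotoneOn g (Ici M) := by
    apply monotoneOn_of_deriv_nonneg (convex_Ici M) hgd.continuous.continuousOn
      (fun x _ => (hgd x).differentiableWithinAt)
    intro x hx
    rw [interior_Ici] at hx
    have hdg : HasDerivAt g (deriv p x - L / 2) x :=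
      ((hp x).hasDerivAt).sub (by simpa using (hasDerivAt_id x).const_mul (L/2))
    rw [hdg.deriv]
    have := hM x (le_of_lt hx)
    linarith
  set x : ℝ := max M ((C - g M + 1) / (L / 2)) with hx
  have hxM : M ≤ x := le_max_left _ _
  have hgx : g M ≤ g x := hmono self_mem_Ici hxM hxM
  have hx2 : (C - g M + 1) / (L / 2) ≤ x := le_max_right _ _
  have hL2 : 0 < L / 2 := by linarith
  have hbig : C - g M + 1 ≤ L / 2 * x := by
    rw [div_le_iff₀ hL2] at hx2; linarith [hx2]
  have hpx : p x = g x + L / 2 * x := by rw [hg]; ring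
  have habs := abs_le.mp (hC x)
  rw [hpx] at habs
  have h2 := habs.2
  clear_value x g
  linarith [h2]

lemma aux_lim (p : ℝ → ℝ) (hp : Differentiable ℝ p) (C : ℝ) (hC : ∀ x, |p x| ≤ C)
    (L : ℝ) (hL : Tendsto (deriv p) atTop (nhds L)) : L = 0 := by
  by_contra h0
  rcases lt_or_gt_of_ne h0 with hneg | hpos
  · apply aux_pos (fun x => -p x) hp.neg C (fun x => by simpa using hC x) (-L) (by linarith)
    have : deriv (fun x => -p x) = fun x => -deriv p x := by
      funext x; exact deriv.neg
    rw [this]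
    exact hL.neg
  · exact aux_pos p hp C hC L hpos hL

lemma aux_lim_bot (p : ℝ → ℝ) (hp : Differentiable ℝ p) (C : ℝ) (hC : ∀ x, |p x| ≤ C)
    (L : ℝ) (hL : Tendsto (deriv p) atBot (nhds L)) : L = 0 := by
  set q : ℝ → ℝ := fun x => p (-x) with hq
  have hqd : Differentiable ℝ q := hp.comp differentiable_neg
  have hdq : ∀ x, deriv q x = -deriv p (-x) := by
    intro x
    have h1 : HasDerivAt q (deriv p (-x) * (-1)) x :=
      ((hp (-x)).hasDerivAt).comp x (hasDerivAt_neg x)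
    simpa using h1.deriv
  have hqb : ∀ x, |q x| ≤ C := fun x => hC (-x)
  have hql : Tendsto (deriv q) atTop (nhds (-L)) := by
    have h2 : Tendsto (fun x => deriv p (-x)) atTop (nhds L) :=
      hL.comp tendsto_neg_atTop_atBot
    have := h2.neg
    apply this.congr
    intro x; exact (hdq x).symm
  have := aux_lim q hqd C hqb (-L) hql
  linarith [this]

/-- From the once-integrated travelling-wave equation with bounded pressure,
the pressure gradient vanishes at `±∞`, and the Rankine–Hugoniot relations follow. -/
theorem stmt5 (h : ℝ → ℝ) (hc : Continuous h) (c A S_l S_r : ℝ)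
    (hne : S_l ≠ S_r) (hl : h S_l ≠ 0) (hr : h S_r ≠ 0)
    (S p : ℝ → ℝ)
    (hSl : Tendsto S atBot (nhds S_l))
    (hSr : Tendsto S atTop (nhds S_r))
    (hp : Differentiable ℝ p) (hpb : ∃ C, ∀ η, |p η| ≤ C)
    (heq : ∀ η, -c * S η + h (S η) * (1 + deriv p η) = A) :
    Tendsto (deriv p) atTop (nhds 0) ∧ Tendsto (deriv p) atBot (nhds 0) ∧
    c = (h S_l - h S_r) / (S_l - S_r) ∧ A = -c * S_l + h S_l := by
  obtain ⟨C, hC⟩ := hpb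
  have key : ∀ η, h (S η) ≠ 0 → deriv p η = (A + c * S η) / h (S η) - 1 := by
    intro η hη
    have h1 := heq η
    have h2 : (1 + deriv p η) * h (S η) = A + c * S η := by linarith [h1]
    have := (eq_div_iff hη).mpr h2
    linarith [this]
  -- at top
  have hhr : Tendsto (fun η => h (S η)) atTop (nhds (h S_r)) := (hc.tendsto _).comp hSr
  have hhl : Tendsto (fun η => h (S η)) atBot (nhds (h S_l)) := (hc.tendsto _).comp hSl
  have hner : ∀ᶠ η in atTop, h (S η) ≠ 0 := hhr.eventually_ne hr
  have hnel : ∀ᶠ η in atBot, h (S η) ≠ 0 := hhl.eventually_ne hl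
  have hlimr : Tendsto (deriv p) atTop (nhds ((A + c * S_r) / h S_r - 1)) := by
    have h3 : Tendsto (fun η => (A + c * S η) / h (S η) - 1) atTop
        (nhds ((A + c * S_r) / h S_r - 1)) :=
      (((tendsto_const_nhds.add (hSr.const_mul c)).div hhr hr).sub tendsto_const_nhds)
    apply h3.congr'
    filter_upwards [hner] with η hη
    exact (key η hη).symm
  have hliml : Tendsto (deriv p) atBot (nhds ((A + c * S_l) / h S_l - 1)) := by
    have h3 : Tendsto (fun η => (A + c * S η) / h (S η) - 1) atBot
        (nhds ((A + c * S_l) / h S_l - 1)) :=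
      (((tendsto_const_nhds.add (hSl.const_mul c)).div hhl hl).sub tendsto_const_nhds)
    apply h3.congr'
    filter_upwards [hnel] with η hη
    exact (key η hη).symm
  have hr0 : (A + c * S_r) / h S_r - 1 = 0 := aux_lim p hp C hC _ hlimr
  have hl0 : (A + c * S_l) / h S_l - 1 = 0 := aux_lim_bot p hp C hC _ hliml
  have hRr : A + c * S_r = h S_r := by
    have : (A + c * S_r) / h S_r = 1 := by linarith
    field_simp at this
    linarith
  have hRl : A + c * S_l = h S_l := by
    have : (A + c * S_l) / h S_l = 1 := by linarith
    field_simp at this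
    linarith
  have hcval : c = (h S_l - h S_r) / (S_l - S_r) := by
    rw [eq_div_iff (sub_ne_zero.mpr hne)]
    linarith
  refine ⟨?_, ?_, hcval, by linarith⟩
  · rw [hr0] at hlimr; exact hlimr
  · rw [hl0] at hliml; exact hliml
end

section
/- Let S_r < S_l ≤ 1 be real numbers and let h : [S_r, 1] → ℝ be continuous with h(s) > h(S_l) for all s ∈ (S_r, S_l) and h(s) < h(S_l) for all s ∈ (S_l, 1]. Let D : [S_r, 1] → ℝ be continuous with D > 0. If S : (−∞, 0] → [S_r, 1] is differentiable, satisfies D(S(η))·S'(η) = h(S(η)) − h(S_l) for all η ≤ 0, and S(η) → S_l as η → −∞, then S(η) = S_l for all η ≤ 0. -/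
open Set Filter

/-- The left half-profile of a stationary travelling wave approaching `S_l` at `-∞`
is identically `S_l`. -/
theorem stmt8 (S_r S_l : ℝ) (hrl : S_r < S_l) (hl1 : S_l ≤ 1)
    (h : ℝ → ℝ) (hc : ContinuousOn h (Icc S_r 1))
    (hgt : ∀ s ∈ Ioo S_r S_l, h S_l < h s)
    (hlt : ∀ s ∈ Ioc S_l 1, h s < h S_l)
    (D : ℝ → ℝ) (hD : ContinuousOn D (Icc S_r 1)) (hDpos : ∀ s ∈ Icc S_r 1, 0 < D s)
    (S S' : ℝ → ℝ)
    (hmaps : ∀ η ≤ (0:ℝ), S η ∈ Icc S_r 1)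
    (hderiv : ∀ η ≤ (0:ℝ), HasDerivWithinAt S (S' η) (Iic 0) η)
    (hode : ∀ η ≤ (0:ℝ), D (S η) * S' η = h (S η) - h S_l)
    (hlim : Tendsto S atBot (nhds S_l)) :
    ∀ η ≤ (0:ℝ), S η = S_l := by
  have hr1 : S_r ≤ (1:ℝ) := le_trans hrl.le hl1
  -- clamped version of h - h S_l, continuous on all of ℝ
  set g : ℝ → ℝ := fun t => h (max S_r (min t 1)) - h S_l with hg_def
  have hclamp : ∀ t, max S_r (min t 1) ∈ Icc S_r 1 :=
    fun t => ⟨le_max_left _ _, max_le hr1 (min_le_right _ _)⟩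
  have hgcont : Continuous g := by
    apply Continuous.sub _ continuous_const
    exact hc.comp_continuous
      (continuous_const.max (continuous_id.min continuous_const)) hclamp
  have hgeq : ∀ t ∈ Icc S_r 1, g t = h t - h S_l := by
    intro t ht
    have : max S_r (min t 1) = t := by
      rw [min_eq_left ht.2, max_eq_right ht.1]
    simp [hg_def, this]
  have hSl : S_l ∈ Icc S_r 1 := ⟨hrl.le, hl1⟩
  -- Lyapunov function
  set V : ℝ → ℝ := fun s => ∫ t in S_l..s, g t with hV_def
  have hVderiv : ∀ s, HasDerivAt V (g s) s := fun s =>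
    intervalIntegral.integral_hasDerivAt_right (hgcont.intervalIntegrable _ _)
      (hgcont.stronglyMeasurableAtFilter _ _) hgcont.continuousAt
  have hVSl : V S_l = 0 := intervalIntegral.integral_same
  -- V is strictly negative on Icc S_r 1 away from S_l
  have hVneg : ∀ s ∈ Icc S_r 1, s ≠ S_l → V s < 0 := by
    intro s hs hne
    rcases lt_or_gt_of_ne hne with hlt' | hgt'
    · -- s < S_l
      have hpos : (0:ℝ) < ∫ t in s..S_l, g t := by
        apply intervalIntegral.intervalIntegral_pos_of_pos_on
          (hgcont.intervalIntegrable _ _) _ hlt'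
        intro x hx
        have hxI : x ∈ Icc S_r 1 := ⟨le_trans hs.1 hx.1.le, le_trans hx.2.le hl1⟩
        rw [hgeq x hxI]
        exact sub_pos.2 (hgt x ⟨lt_of_le_of_lt hs.1 hx.1, hx.2⟩)
      have : V s = -∫ t in s..S_l, g t := intervalIntegral.integral_symm _ _
      rw [this]; linarith
    · -- S_l < s
      have hpos : (0:ℝ) < ∫ t in S_l..s, (fun t => -g t) t := by
        apply intervalIntegral.intervalIntegral_pos_of_pos_on
          ((hgcont.neg).intervalIntegrable _ _) _ hgt'
        intro x hx
        have hxI : x ∈ Icc S_r 1 := ⟨le_trans hSl.1 hx.1.le, le_trans hx.2.le hs.2⟩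
        show (0:ℝ) < -g x
        rw [neg_pos]
        rw [hgeq x hxI]
        exact sub_neg.2 (hlt x ⟨hx.1, le_trans hx.2.le hs.2⟩)
      have : (∫ t in S_l..s, (fun t => -g t) t) = -V s := by
        simp [hV_def, intervalIntegral.integral_neg]
      rw [this] at hpos; linarith
  -- G = V ∘ S is monotone on Iic 0
  set G : ℝ → ℝ := fun η => V (S η) with hG_def
  have hGderiv : ∀ η ≤ (0:ℝ), HasDerivWithinAt G (g (S η) * S' η) (Iic 0) η :=
    fun η hη => (hVderiv (S η)).comp_hasDerivWithinAt η (hderiv η hη)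
  have hGnonneg : ∀ η ≤ (0:ℝ), 0 ≤ g (S η) * S' η := by
    intro η hη
    have := hode η hη
    rw [hgeq _ (hmaps η hη), ← this]
    have : D (S η) * S' η * S' η = D (S η) * (S' η * S' η) := by ring
    rw [this]
    exact mul_nonneg (hDpos _ (hmaps η hη)).le (mul_self_nonneg _)
  have hGcont : ContinuousOn G (Iic 0) := by
    intro η hη
    exact ((hVderiv (S η)).continuousAt.continuousWithinAt).comp
      (hderiv η hη).continuousWithinAt (mapsTo_univ _ _)
  have hmono : MonotoneOn G (Iic 0) := by
    apply monotoneOn_of_hasDerivWithinAt_nonneg (convex_Iic 0) hGcont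
      (f' := fun η => g (S η) * S' η)
    · intro x hx
      rw [interior_Iic] at hx ⊢
      exact (hGderiv x hx.le).mono Iio_subset_Iic_self
    · intro x hx
      rw [interior_Iic] at hx
      exact hGnonneg x hx.le
  -- G tends to 0 at -∞
  have hGlim : Tendsto G atBot (nhds 0) := by
    rw [← hVSl]
    exact ((hVderiv S_l).continuousAt.tendsto).comp hlim
  -- hence 0 ≤ G η for η ≤ 0
  intro η hη
  have hge : (0:ℝ) ≤ G η := by
    apply le_of_tendsto hGlim
    filter_upwards [eventually_le_atBot (min η 0)] with x hx
    exact hmono (le_trans hx (min_le_right _ _) : x ≤ (0:ℝ))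
      hη (le_trans hx (min_le_left _ _))
  by_contra hne
  exact absurd hge (not_le.2 (hVneg _ (hmaps η hη) hne))
end

section
/- Let h : [0,1] → ℝ be twice continuously differentiable with h(0) = h(1) = 0, and suppose there exist 0 < S_1 < S_M < S_2 < 1 such that h'(S) > 0 for 0 < S < S_M, h'(S) < 0 for S_M < S < 1, h''(S) > 0 for S ∈ (0, S_1) ∪ (S_2, 1), and h''(S) < 0 for S ∈ (S_1, S_2). Then for every S_B ∈ (0, S_1) there exists S̄_B ∈ (S_B, 1) such that h'(S̄_B) = (h(S̄_B) − h(S_B))/(S̄_B − S_B) and (h(S̄_B) − h(S_B))/(S̄_B − S_B) ≥ (h(u) − h(S_B))/(u − S_B) for all u ∈ (S_B, 1]. -/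
open Set

/-- Existence of the tangent point `S̄_B ∈ (S_B, 1)` where the secant slope from
`(S_B, h S_B)` equals the derivative and is maximal over `(S_B, 1]`. -/
theorem stmt10 (h : ℝ → ℝ) (hreg : ContDiff ℝ 2 h) (h0 : h 0 = 0) (h1 : h 1 = 0)
    (S_1 S_M S_2 : ℝ)
    (ho1 : 0 < S_1) (ho2 : S_1 < S_M) (ho3 : S_M < S_2) (ho4 : S_2 < 1)
    (hd1 : ∀ S ∈ Ioo (0:ℝ) S_M, 0 < deriv h S)
    (hd2 : ∀ S ∈ Ioo S_M (1:ℝ), deriv h S < 0)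
    (hdd1 : ∀ S ∈ Ioo (0:ℝ) S_1 ∪ Ioo S_2 1, 0 < deriv (deriv h) S)
    (hdd2 : ∀ S ∈ Ioo S_1 S_2, deriv (deriv h) S < 0) :
    ∀ S_B ∈ Ioo (0:ℝ) S_1, ∃ SB ∈ Ioo S_B 1,
      deriv h SB = (h SB - h S_B) / (SB - S_B) ∧
      ∀ u ∈ Ioc S_B (1:ℝ), (h u - h S_B) / (u - S_B) ≤ (h SB - h S_B) / (SB - S_B) := by
  intro a ha
  obtain ⟨ha0, haS1⟩ := ha
  have hS1M : S_1 < S_M := ho2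
  have hM1 : S_M < 1 := ho3.trans ho4
  have ha1 : a < 1 := haS1.trans (hS1M.trans hM1)
  have haM : a < S_M := haS1.trans hS1M
  have hdiff : Differentiable ℝ h := hreg.differentiable (by norm_num)
  have hcont : Continuous h := hdiff.continuous
  have hderiv2 : ContDiff ℝ 1 (deriv h) := (contDiff_succ_iff_deriv.mp (by exact_mod_cast hreg : ContDiff ℝ (1+1 : ℕ) h)).2.2
  have hdiff' : Differentiable ℝ (deriv h) := hderiv2.differentiable (by norm_num)
  have hcont' : Continuous (deriv h) := hdiff'.continuous
  -- h'(a) > 0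
  have hda : 0 < deriv h a := hd1 a ⟨ha0, haM⟩
  -- h a > 0
  have hapos : 0 < h a := by
    have hmono : StrictMonoOn h (Icc 0 S_M) := by
      apply strictMonoOn_of_deriv_pos (convex_Icc 0 S_M) (hcont.continuousOn)
      intro x hx
      rw [interior_Icc] at hx
      exact hd1 x hx
    have := hmono ⟨le_refl 0, (ho1.trans hS1M).le⟩ ⟨ha0.le, haM.le⟩ ha0
    rwa [h0] at this
  -- the slope function, extended by the derivative at a
  set f : ℝ → ℝ := fun u => (h u - h a) / (u - a) with hf
  set G : ℝ → ℝ := fun u => if u = a then deriv h a else f u with hG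
  have hGa : G a = deriv h a := by simp [hG]
  have hGf : ∀ u, u ≠ a → G u = f u := by intro u hu; simp [hG, hu]
  -- continuity of G on Icc a 1
  have hGcont : ContinuousOn G (Icc a 1) := by
    intro x hx
    rcases eq_or_ne x a with rfl | hxa
    · apply ContinuousAt.continuousWithinAt
      rw [← continuousWithinAt_compl_self]
      have hslope : Filter.Tendsto f (nhdsWithin x {x}ᶜ) (nhds (deriv h x)) := by
        have := hasDerivAt_iff_tendsto_slope.mp (hdiff x).hasDerivAt
        apply this.congr
        intro y
        simp [slope, f, hf]; ring
      rw [ContinuousWithinAt, hGa]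
      apply hslope.congr'
      filter_upwards [self_mem_nhdsWithin] with y hy
      exact (hGf y hy).symm
    · apply ContinuousAt.continuousWithinAt
      have hfx : ContinuousAt f x := by
        apply ContinuousAt.div
        · exact (hcont.continuousAt).sub continuousAt_const
        · exact continuousAt_id.sub continuousAt_const
        · exact sub_ne_zero.mpr hxa
      apply hfx.congr
      filter_upwards [isOpen_ne.mem_nhds hxa] with y hy
      exact (hGf y hy).symm
  -- max of G on Icc a 1
  obtain ⟨SB, hSBmem, hSBmax⟩ :=
    (isCompact_Icc).exists_isMaxOn (nonempty_Icc.mpr ha1.le) hGcont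
  have hmax : ∀ u ∈ Icc a 1, G u ≤ G SB := hSBmax
  -- G S_1 > G a, so SB ≠ a
  have hstep1 : G a < G S_1 := by
    have hmono' : StrictMonoOn (deriv h) (Icc a S_1) := by
      apply strictMonoOn_of_deriv_pos (convex_Icc a S_1) (hcont'.continuousOn)
      intro x hx
      rw [interior_Icc] at hx
      exact hdd1 x (Or.inl ⟨ha0.trans hx.1, hx.2⟩)
    obtain ⟨c, hc, hcslope⟩ := exists_hasDerivAt_eq_slope h (deriv h) haS1
      (hcont.continuousOn) (fun x _ => (hdiff x).hasDerivAt)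
    have h1 : deriv h a < deriv h c :=
      hmono' ⟨le_refl a, haS1.le⟩ ⟨hc.1.le, hc.2.le⟩ hc.1
    rw [hGa, hGf S_1 (ne_of_gt haS1), hf]
    calc deriv h a < deriv h c := h1
      _ = (h S_1 - h a) / (S_1 - a) := hcslope
  have hS1mem : S_1 ∈ Icc a 1 := ⟨haS1.le, (hS1M.trans hM1).le⟩
  have hSBa : SB ≠ a := by
    intro hh
    rw [hh] at hmax
    exact absurd (hmax S_1 hS1mem) (not_le.mpr hstep1)
  -- G 1 < G a ≤ G SB, so SB ≠ 1
  have hSB1 : SB ≠ 1 := by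
    intro hh
    have hG1 : G 1 = (0 - h a) / (1 - a) := by
      rw [hGf 1 (ne_of_gt ha1)]; simp [hf, h1]
    have hG1neg : G 1 < 0 := by
      rw [hG1]
      apply div_neg_of_neg_of_pos (by linarith) (by linarith)
    have := hmax a ⟨le_refl a, ha1.le⟩
    rw [hGa, hh] at this
    linarith
  have hSBIoo : SB ∈ Ioo a 1 := ⟨lt_of_le_of_ne hSBmem.1 (Ne.symm hSBa), lt_of_le_of_ne hSBmem.2 hSB1⟩
  have hSBsub : SB - a ≠ 0 := sub_ne_zero.mpr hSBa
  -- f has derivative at SB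
  have hfderiv : HasDerivAt f ((deriv h SB * (SB - a) - (h SB - h a) * 1) / (SB - a) ^ 2) SB := by
    apply HasDerivAt.div
    · exact ((hdiff SB).hasDerivAt).sub_const (h a)
    · simpa using (hasDerivAt_id SB).sub_const a
    · exact hSBsub
  -- G = f near SB
  have hGfnear : G =ᶠ[nhds SB] f := by
    filter_upwards [isOpen_ne.mem_nhds hSBa] with y hy
    exact hGf y hy
  have hGderiv : HasDerivAt G ((deriv h SB * (SB - a) - (h SB - h a) * 1) / (SB - a) ^ 2) SB :=
    hfderiv.congr_of_eventuallyEq hGfnear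
  -- local max gives zero derivative
  have hlocal : IsLocalMax G SB := by
    apply hSBmax.isLocalMax
    exact Icc_mem_nhds hSBIoo.1 hSBIoo.2
  have hzero : (deriv h SB * (SB - a) - (h SB - h a) * 1) / (SB - a) ^ 2 = 0 :=
    hlocal.hasDerivAt_eq_zero hGderiv
  have hsq : (SB - a) ^ 2 ≠ 0 := pow_ne_zero 2 hSBsub
  have hkey : deriv h SB * (SB - a) = h SB - h a := by
    have := (div_eq_zero_iff.mp hzero).resolve_right hsq
    linarith
  refine ⟨SB, hSBIoo, ?_, ?_⟩
  · field_simp [hSBsub]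
    linarith [hkey]
  · intro u hu
    have h1' : G u ≤ G SB := hmax u ⟨hu.1.le, hu.2⟩
    rw [hGf u (ne_of_gt hu.1), hGf SB (Ne.symm (ne_of_lt hSBIoo.1))] at h1'
    exact h1'
end
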